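/- arXiv:1605.03203 — 6 statements merged into one kernel-verified Lean document; each statement's English description precedes it below -/
import Mathlib

section
/- Let P ⊆ ℝ^n be a polytope, c ∈ ℝ^n, A ∈ ℝ^{m×n} with nonnegative entries, b, Δ ∈ ℝ_+^m. Let OPT(Δ) = min{cᵀx : x ∈ P, Ax ≤ b + Δ} and OPT(0) = min{cᵀx : x ∈ P, Ax ≤ b} (assume the latter is feasible). Suppose x* is optimal for the LP defining OPT(Δ), y* ∈ ℝ_+^m is such that x* minimizes x ↦ (c + Aᵀy*)ᵀx over P and (y*)ᵀ(Ax* − b − Δ) = 0, and min_{x∈P}(cᵀx + (y*)ᵀ(Ax − b − 0)) ≤ OPT(0). If x̃ lies on the minimal face of P containing x* and satisfies Ax* − Δ ≤ Ax̃ ≤ Ax* + Δ componentwise, then cᵀx̃ ≤ OPT(0) and Ax̃ ≤ b + 2Δ. -/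
open Matrix

/-!
The Lagrangian `x ↦ (c + Aᵀy*)ᵀx` attains its minimum over `P` at `x*`. A linear map is
concave, so its set of minimisers over `P` is an extreme subset of `P`; it contains `x*`, hence
the minimal face, and the Lagrangian takes the same value at `x̃` as at `x*`. By complementary slackness and
`Ax̃ ≥ Ax* − Δ`, this gives `cᵀx̃ ≤ cᵀx* + (y*)ᵀΔ`, and the right-hand side is a lower bound
for the Lagrangian dual at `Δ = 0`, hence at most `OPT(0)`. The packing bound only uses
`Ax̃ ≤ Ax* + Δ ≤ b + 2Δ`.
-/

theorem isExtreme_setOf_isMinOn {𝕜 E : Type*} [Field 𝕜] [LinearOrder 𝕜] [IsStrictOrderedRing 𝕜]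
    [AddCommGroup E] [Module 𝕜 E] (f : E →ₗ[𝕜] 𝕜) (A : Set E) :
    IsExtreme 𝕜 A {x ∈ A | IsMinOn f A x} := by
  refine ⟨Set.sep_subset _ _, fun x₁ hx₁ x₂ hx₂ x ⟨_, hxmin⟩ hx => ⟨hx₁, fun y hy => ?_⟩⟩
  have hconc : ConcaveOn 𝕜 Set.univ f := f.concaveOn convex_univ
  calc f x₁ ≤ f x := hconc.left_le_of_le_right trivial trivial hx (hxmin hx₂)
    _ ≤ f y := hxmin hy

theorem Matrix.add_transpose_mulVec_dotProduct {R m n : Type*} [CommSemiring R] [Fintype m]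
    [Fintype n] (c x : n → R) (A : Matrix m n R) (y : m → R) :
    (c + Aᵀ *ᵥ y) ⬝ᵥ x = c ⬝ᵥ x + y ⬝ᵥ A *ᵥ x := by
  rw [add_dotProduct, mulVec_transpose, ← dotProduct_mulVec]

theorem additive_reduction_general {n m : ℕ} (P : Set (Fin n → ℝ))
    (c : Fin n → ℝ)
    (A : Matrix (Fin m) (Fin n) ℝ)
    (b Δ : Fin m → ℝ)
    (OPT0 : ℝ)
    -- x* is optimal for the LP defining OPT(Δ)
    (xstar : Fin n → ℝ) (hxP : xstar ∈ P)
    (hxfeas : ∀ i, A.mulVec xstar i ≤ b i + Δ i)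
    -- y* ≥ 0, Lagrangian optimality and complementary slackness
    (ystar : Fin m → ℝ) (hy : ∀ i, 0 ≤ ystar i)
    (hmin : ∀ x ∈ P,
      (c + A.transpose.mulVec ystar) ⬝ᵥ xstar ≤ (c + A.transpose.mulVec ystar) ⬝ᵥ x)
    (hcs : ystar ⬝ᵥ (A.mulVec xstar - b - Δ) = 0)
    -- weak duality at Δ = 0
    (hweak : sInf ((fun x => c ⬝ᵥ x + ystar ⬝ᵥ (A.mulVec x - b)) '' P) ≤ OPT0)
    -- x̃ lies on the minimal face of P containing x*, two-sided additive rounding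
    (F : Set (Fin n → ℝ))
    (hFmin : ∀ G : Set (Fin n → ℝ), IsExtreme ℝ P G → xstar ∈ G → F ⊆ G)
    (xtil : Fin n → ℝ) (hxtilF : xtil ∈ F)
    (hround : ∀ i, A.mulVec xstar i - Δ i ≤ A.mulVec xtil i ∧
      A.mulVec xtil i ≤ A.mulVec xstar i + Δ i) :
    c ⬝ᵥ xtil ≤ OPT0 ∧ ∀ i, A.mulVec xtil i ≤ b i + 2 * Δ i := by
  set w := c + A.transpose.mulVec ystar
  obtain ⟨hxtilP, hxtilmin⟩ := hFmin _ (isExtreme_setOf_isMinOn (dotProductBilin ℝ ℝ w) P)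
    ⟨hxP, isMinOn_iff.mpr hmin⟩ hxtilF
  have hlag : w ⬝ᵥ xtil = w ⬝ᵥ xstar :=
    le_antisymm (isMinOn_iff.mp hxtilmin xstar hxP) (hmin xtil hxtilP)
  rw [add_transpose_mulVec_dotProduct, add_transpose_mulVec_dotProduct] at hlag
  have hslack : ystar ⬝ᵥ A *ᵥ xstar = ystar ⬝ᵥ b + ystar ⬝ᵥ Δ := by
    rw [dotProduct_sub, dotProduct_sub] at hcs
    linarith
  have hrounded : ystar ⬝ᵥ A *ᵥ xstar ≤ ystar ⬝ᵥ (A *ᵥ xtil + Δ) :=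
    dotProduct_le_dotProduct_of_nonneg_left (fun i => sub_le_iff_le_add.mp (hround i).1) hy
  have hdual : c ⬝ᵥ xstar + ystar ⬝ᵥ Δ
      ≤ sInf ((fun x => c ⬝ᵥ x + ystar ⬝ᵥ (A.mulVec x - b)) '' P) := by
    refine le_csInf ⟨_, xstar, hxP, rfl⟩ ?_
    rintro _ ⟨x, hx, rfl⟩
    have hx_lag := hmin x hx
    rw [add_transpose_mulVec_dotProduct, add_transpose_mulVec_dotProduct] at hx_lag
    simp only [dotProduct_sub]
    linarith
  rw [dotProduct_add] at hrounded
  exact ⟨by linarith, fun i => by linarith [(hround i).2, hxfeas i]⟩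

/-- the additive version of the reduction.  If `x*` is optimal for the LP
with constraints `Ax ≤ b + Δ`, `y* ≥ 0` certifies Lagrangian optimality with
complementary slackness, weak duality `φ_0(y*) ≤ OPT(0)` holds, and `x̃` lies on the
minimal face of `P` containing `x*` with `Ax* − Δ ≤ Ax̃ ≤ Ax* + Δ`, then
`cᵀx̃ ≤ OPT(0)` and `Ax̃ ≤ b + 2Δ`. -/
theorem additive_reduction {n m : ℕ} (P : Set (Fin n → ℝ))
    (hpoly : ∃ s : Finset (Fin n → ℝ), P = convexHull ℝ (↑s : Set (Fin n → ℝ)))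
    (c : Fin n → ℝ)
    (A : Matrix (Fin m) (Fin n) ℝ) (hA : ∀ i j, 0 ≤ A i j)
    (b Δ : Fin m → ℝ) (hb : ∀ i, 0 ≤ b i) (hΔ : ∀ i, 0 ≤ Δ i)
    (OPTΔ OPT0 : ℝ)
    (hOPTΔ : OPTΔ = sInf ((fun x => c ⬝ᵥ x) '' {x ∈ P | ∀ i, A.mulVec x i ≤ b i + Δ i}))
    (hOPT0 : OPT0 = sInf ((fun x => c ⬝ᵥ x) '' {x ∈ P | ∀ i, A.mulVec x i ≤ b i}))
    (hfeas0 : {x ∈ P | ∀ i, A.mulVec x i ≤ b i}.Nonempty)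
    -- x* is optimal for the LP defining OPT(Δ)
    (xstar : Fin n → ℝ) (hxP : xstar ∈ P)
    (hxfeas : ∀ i, A.mulVec xstar i ≤ b i + Δ i)
    (hxopt : c ⬝ᵥ xstar = OPTΔ)
    -- y* ≥ 0, Lagrangian optimality and complementary slackness
    (ystar : Fin m → ℝ) (hy : ∀ i, 0 ≤ ystar i)
    (hmin : ∀ x ∈ P,
      (c + A.transpose.mulVec ystar) ⬝ᵥ xstar ≤ (c + A.transpose.mulVec ystar) ⬝ᵥ x)
    (hcs : ystar ⬝ᵥ (A.mulVec xstar - b - Δ) = 0)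
    -- weak duality at Δ = 0
    (hweak : sInf ((fun x => c ⬝ᵥ x + ystar ⬝ᵥ (A.mulVec x - b)) '' P) ≤ OPT0)
    -- x̃ lies on the minimal face of P containing x*, two-sided additive rounding
    (F : Set (Fin n → ℝ)) (hF : IsExtreme ℝ P F) (hxF : xstar ∈ F)
    (hFmin : ∀ G : Set (Fin n → ℝ), IsExtreme ℝ P G → xstar ∈ G → F ⊆ G)
    (xtil : Fin n → ℝ) (hxtilF : xtil ∈ F)
    (hround : ∀ i, A.mulVec xstar i - Δ i ≤ A.mulVec xtil i ∧
      A.mulVec xtil i ≤ A.mulVec xstar i + Δ i) :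
    c ⬝ᵥ xtil ≤ OPT0 ∧ ∀ i, A.mulVec xtil i ≤ b i + 2 * Δ i :=
  additive_reduction_general P c A b Δ OPT0 xstar hxP hxfeas ystar hy hmin hcs hweak F hFmin xtil
    hxtilF hround
end

section
/- Equal perturbed costs within a tight set: let x ∈ ℝ^E be a point of the spanning tree polytope of a connected graph G = (V,E), let L ⊆ V with x(E(L)) = |L| − 1, and let e, f be two edges of supp(x) that connect the same pair of children in the contraction: formally, suppose for every set S ⊆ V whose spanning-tree constraint is tight at x (i.e., x(E(S)) = |S|−1 or S = V), e ∈ E(S) if and only if f ∈ E(S). Let w ∈ ℝ^E and suppose x minimizes z ↦ wᵀz over the spanning tree polytope. Then w_e = w_f. -/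
open Finset
open scoped Classical

/-- Membership in the spanning tree polytope of the graph on vertex set `V` with edge
set `E` and endpoint maps `u v : E → V`. -/
def InSTPolytope {V E : Type*} [Fintype V] [Fintype E] (u v : E → V) (z : E → ℝ) : Prop :=
  (∀ e, 0 ≤ z e) ∧
  (∀ S : Finset V, S.Nonempty → S ≠ Finset.univ →
    ∑ e ∈ Finset.univ.filter (fun e => u e ∈ S ∧ v e ∈ S), z e ≤ (S.card : ℝ) - 1) ∧
  (∑ e : E, z e = (Fintype.card V : ℝ) - 1)

/-!
Moving from `x` in the direction `±(𝟙_e - 𝟙_f)` changes neither the total weight nor the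
weight of any tight set, since each tight set contains both edges or neither. Slack
constraints, and the nonnegativity of the positive coordinates `x_e, x_f`, survive a small
enough step, so both `x ± ε (𝟙_e - 𝟙_f)` lie in the polytope and optimality of `x` forces
`w_e - w_f = 0`.
-/

open Filter Topology Matrix

lemma eventually_add_mul_le {c b k : ℝ} (hcb : c ≤ b) (htight : c = b → k ≤ 0) :
    ∀ᶠ t in 𝓝[>] (0 : ℝ), c + t * k ≤ b := by
  rcases hcb.lt_or_eq with hlt | heq
  · have hcont : Tendsto (fun t : ℝ => c + t * k) (𝓝[>] 0) (𝓝 c) :=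
      ((continuous_const.add (continuous_id.mul continuous_const)).tendsto' 0 c
        (by simp)).mono_left nhdsWithin_le_nhds
    exact (hcont.eventually_lt_const hlt).mono fun _ => le_of_lt
  · filter_upwards [self_mem_nhdsWithin] with t (ht : 0 < t)
    nlinarith [htight heq]

lemma dotProduct_nonneg_of_isMinOn {ι : Type*} [Fintype ι] {K : Set (ι → ℝ)}
    {w x d : ι → ℝ} (hmin : IsMinOn (w ⬝ᵥ ·) K x)
    (hd : ∀ᶠ t in 𝓝[>] (0 : ℝ), x + t • d ∈ K) : 0 ≤ w ⬝ᵥ d := by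
  obtain ⟨t, hmem, ht : 0 < t⟩ := (hd.and self_mem_nhdsWithin).exists
  have := isMinOn_iff.1 hmin _ hmem
  rw [dotProduct_add, dotProduct_smul, smul_eq_mul] at this
  exact nonneg_of_mul_nonneg_right (by linarith) ht

lemma sum_single_sub_single_eq_zero {E : Type*} [DecidableEq E] {a b : E} {F : Finset E}
    (h : a ∈ F ↔ b ∈ F) :
    ∑ g ∈ F, (Pi.single a 1 - Pi.single b 1 : E → ℝ) g = 0 := by
  simp only [Pi.sub_apply, sum_sub_distrib, sum_pi_single', h, sub_self]

section SpanningTreePolytope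

variable {V E : Type*} [Fintype E] {u v : E → V}

noncomputable def edgesIn (u v : E → V) (S : Finset V) : Finset E :=
  univ.filter fun g => u g ∈ S ∧ v g ∈ S

lemma sum_edgesIn_add_smul (S : Finset V) (x d : E → ℝ) (t : ℝ) :
    ∑ g ∈ edgesIn u v S, (x + t • d) g
      = ∑ g ∈ edgesIn u v S, x g + t * ∑ g ∈ edgesIn u v S, d g := by
  simp only [Pi.add_apply, Pi.smul_apply, smul_eq_mul, sum_add_distrib, mul_sum]

lemma InSTPolytope.eventually_add_smul [Fintype V] {x d : E → ℝ} (hx : InSTPolytope u v x)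
    (hzero : ∀ g, x g = 0 → 0 ≤ d g)
    (htight : ∀ S : Finset V, S.Nonempty → S ≠ univ →
      ∑ g ∈ edgesIn u v S, x g = (S.card : ℝ) - 1 → ∑ g ∈ edgesIn u v S, d g ≤ 0)
    (htotal : ∑ g, d g = 0) :
    ∀ᶠ t in 𝓝[>] (0 : ℝ), InSTPolytope u v (x + t • d) := by
  obtain ⟨hx0, hxS, hxT⟩ := hx
  have hnonneg : ∀ᶠ t in 𝓝[>] (0 : ℝ), ∀ g, 0 ≤ (x + t • d) g := by
    refine eventually_all.2 fun g => ?_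
    filter_upwards [eventually_add_mul_le (c := -x g) (b := 0) (k := -d g)
      (by linarith [hx0 g]) fun h => by linarith [hzero g (neg_eq_zero.1 h)]] with t ht
    simp only [Pi.add_apply, Pi.smul_apply, smul_eq_mul]
    linarith
  have hsets : ∀ᶠ t in 𝓝[>] (0 : ℝ), ∀ S : Finset V, S.Nonempty → S ≠ univ →
      ∑ g ∈ edgesIn u v S, (x + t • d) g ≤ (S.card : ℝ) - 1 := by
    refine eventually_all.2 fun S => ?_
    by_cases hS : S.Nonempty ∧ S ≠ univ
    · filter_upwards [eventually_add_mul_le (hxS S hS.1 hS.2) (htight S hS.1 hS.2)]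
        with t ht _ _
      rwa [sum_edgesIn_add_smul]
    · exact Eventually.of_forall fun _ h₁ h₂ => absurd ⟨h₁, h₂⟩ hS
  filter_upwards [hnonneg, hsets] with t h₁ h₂
  refine ⟨h₁, h₂, ?_⟩
  simp only [Pi.add_apply, Pi.smul_apply, smul_eq_mul, sum_add_distrib, ← mul_sum, htotal,
    mul_zero, add_zero, hxT]

lemma InSTPolytope.cost_le_of_optimal [Fintype V] {x w : E → ℝ} (hx : InSTPolytope u v x)
    {a b : E} (hb : 0 < x b)
    (htight : ∀ S : Finset V, ∑ g ∈ edgesIn u v S, x g = (S.card : ℝ) - 1 →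
      ((u a ∈ S ∧ v a ∈ S) ↔ (u b ∈ S ∧ v b ∈ S)))
    (hmin : ∀ z, InSTPolytope u v z → w ⬝ᵥ x ≤ w ⬝ᵥ z) :
    w b ≤ w a := by
  have hzero (g : E) (hg : x g = 0) : 0 ≤ (Pi.single a 1 - Pi.single b 1 : E → ℝ) g := by
    have hgb : g ≠ b := by rintro rfl; linarith
    simp only [Pi.sub_apply, Pi.single_apply, hgb, if_false, sub_zero]
    split_ifs <;> norm_num
  have hfeas := hx.eventually_add_smul hzero
    (fun S _ _ hS => (sum_single_sub_single_eq_zero (by simpa [edgesIn] using htight S hS)).le)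
    (sum_single_sub_single_eq_zero (by simp))
  have := dotProduct_nonneg_of_isMinOn (K := {z | InSTPolytope u v z})
    (isMinOn_iff.2 hmin) hfeas
  simp only [dotProduct_sub, dotProduct_single, mul_one] at this
  linarith

end SpanningTreePolytope

theorem equal_cost_in_tight_set_general {V E : Type*} [Fintype V] [Fintype E]
    (u v : E → V)
    (x : E → ℝ) (hx : InSTPolytope u v x)
    (e f : E) (he : 0 < x e) (hf : 0 < x f)
    (htight : ∀ S : Finset V,
      ((∑ g ∈ Finset.univ.filter (fun g => u g ∈ S ∧ v g ∈ S), x g = (S.card : ℝ) - 1)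
        ∨ S = Finset.univ) →
      ((u e ∈ S ∧ v e ∈ S) ↔ (u f ∈ S ∧ v f ∈ S)))
    (w : E → ℝ)
    (hmin : ∀ z : E → ℝ, InSTPolytope u v z → ∑ g, w g * x g ≤ ∑ g, w g * z g) :
    w e = w f :=
  le_antisymm (hx.cost_le_of_optimal he (fun S hS => (htight S (Or.inl hS)).symm) hmin)
    (hx.cost_le_of_optimal hf (fun S hS => htight S (Or.inl hS)) hmin)

/-- equal perturbed costs within a tight set.  If `x` is in the spanning
tree polytope of a connected graph, `L` is tight at `x`, the two support edges `e, f`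
lie in the same tight sets (every set `S` with `x(E(S)) = |S|−1` or `S = V` contains
both or neither), and `x` minimizes `wᵀz` over the spanning tree polytope, then
`w_e = w_f`. -/
theorem equal_cost_in_tight_set {V E : Type*} [Fintype V] [Fintype E]
    (u v : E → V)
    (hconn : (SimpleGraph.fromRel (fun a b => ∃ e : E, u e = a ∧ v e = b)).Connected)
    (x : E → ℝ) (hx : InSTPolytope u v x)
    (L : Finset V)
    (hL : ∑ e ∈ Finset.univ.filter (fun e => u e ∈ L ∧ v e ∈ L), x e = (L.card : ℝ) - 1)
    (e f : E) (hef : e ≠ f) (he : 0 < x e) (hf : 0 < x f)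
    (heL : u e ∈ L ∧ v e ∈ L) (hfL : u f ∈ L ∧ v f ∈ L)
    (htight : ∀ S : Finset V,
      ((∑ g ∈ Finset.univ.filter (fun g => u g ∈ S ∧ v g ∈ S), x g = (S.card : ℝ) - 1)
        ∨ S = Finset.univ) →
      ((u e ∈ S ∧ v e ∈ S) ↔ (u f ∈ S ∧ v f ∈ S)))
    (w : E → ℝ)
    (hmin : ∀ z : E → ℝ, InSTPolytope u v z → ∑ g, w g * x g ≤ ∑ g, w g * z g) :
    w e = w f :=
  equal_cost_in_tight_set_general u v x hx e f he hf htight w hmin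
end

section
/- Contraction preserves fractional spanning trees: let G = (V,E) be connected, x a point of the spanning tree polytope of G, and let A₁, …, A_k ⊆ V be pairwise disjoint sets with x(E(A_i)) = |A_i| − 1 for each i. Let G' be the graph obtained from G by contracting each A_i to a single node, and let x' be x restricted to the edges of G' (edges of E not inside any A_i). Then x' lies in the spanning tree polytope of G'. -/
/-!
A set of nodes of the contracted graph is the image of a saturated set `R ⊆ V` (a union of
blocks `A i` and of vertices outside all blocks). Its induced edges are those of `E(R)` minus
the edges inside the blocks contained in `R`, which carry `Σ (|A i| - 1)` by tightness, and it
has exactly `|R| - Σ (|A i| - 1)` nodes. So every constraint of the contracted spanning tree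
polytope has the same slack as the corresponding constraint for `R` in `G`.
-/

open Finset
open scoped Classical

def IsSaturated {V ι : Type*} [DecidableEq V] (A : ι → Finset V) (R : Finset V) : Prop :=
  ∀ i, (A i ∩ R).Nonempty → A i ⊆ R

section Contraction

variable {V E ι : Type*} [Fintype E] [Fintype ι] [DecidableEq V]
  (u v : E → V) (x : E → ℝ) {A : ι → Finset V} {R : Finset V}

/-- `InSTPolytope` decides `u e ∈ S` classically; this restates its set constraint with the
ambient `DecidableEq V`. -/
theorem InSTPolytope.sum_inside_le [Fintype V] (hx : InSTPolytope u v x) {S : Finset V}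
    (hS : S.Nonempty) (hS_univ : S ≠ univ) :
    ∑ e ∈ univ.filter (fun e => u e ∈ S ∧ v e ∈ S), x e ≤ (S.card : ℝ) - 1 := by
  convert hx.2.1 S hS hS_univ

theorem IsSaturated.filter_inside_block_eq_biUnion (hR : IsSaturated A R) :
    univ.filter (fun e => (u e ∈ R ∧ v e ∈ R) ∧ ∃ i, u e ∈ A i ∧ v e ∈ A i)
      = (univ.filter (fun i => A i ⊆ R)).biUnion
          (fun i => univ.filter (fun e => u e ∈ A i ∧ v e ∈ A i)) := by
  ext e
  simp only [mem_filter, mem_univ, true_and, mem_biUnion]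
  constructor
  · rintro ⟨⟨huR, -⟩, i, hui, hvi⟩
    exact ⟨i, hR i ⟨u e, mem_inter.2 ⟨hui, huR⟩⟩, hui, hvi⟩
  · rintro ⟨i, hiR, hui, hvi⟩
    exact ⟨⟨hiR hui, hiR hvi⟩, i, hui, hvi⟩

theorem IsSaturated.sum_inside_eq (hA : Pairwise fun i j => Disjoint (A i) (A j))
    (hR : IsSaturated A R) :
    ∑ e ∈ univ.filter (fun e => u e ∈ R ∧ v e ∈ R), x e
      = ∑ e ∈ univ.filter (fun e => (u e ∈ R ∧ v e ∈ R) ∧ ¬ ∃ i, u e ∈ A i ∧ v e ∈ A i), x e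
        + ∑ i ∈ univ.filter (fun i => A i ⊆ R),
            ∑ e ∈ univ.filter (fun e => u e ∈ A i ∧ v e ∈ A i), x e := by
  have hblocks : ((univ.filter (fun i => A i ⊆ R)) : Set ι).PairwiseDisjoint
      (fun i => univ.filter (fun e => u e ∈ A i ∧ v e ∈ A i)) := fun i _ j _ hij =>
    disjoint_filter_filter' _ _ fun _ hi hj e he =>
      disjoint_left.1 (hA hij) (hi e he).1 (hj e he).1
  rw [← sum_biUnion hblocks, ← hR.filter_inside_block_eq_biUnion,
    ← sum_filter_not_add_sum_filter (univ.filter fun e => u e ∈ R ∧ v e ∈ R)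
      (fun e => ∃ i, u e ∈ A i ∧ v e ∈ A i), filter_filter, filter_filter]

theorem IsSaturated.card_eq (hA : Pairwise fun i j => Disjoint (A i) (A j))
    (hR : IsSaturated A R) :
    R.card = ∑ i ∈ univ.filter (fun i => A i ⊆ R), (A i).card + (R \ univ.biUnion A).card := by
  have hsub : (univ.filter (fun i => A i ⊆ R)).biUnion A ⊆ R :=
    biUnion_subset.2 fun i hi => (mem_filter.1 hi).2
  have houtside : R \ univ.biUnion A = R \ (univ.filter (fun i => A i ⊆ R)).biUnion A := by
    ext a
    simp only [mem_sdiff, mem_biUnion, mem_filter, mem_univ, true_and]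
    exact and_congr_right fun ha =>
      not_congr ⟨fun ⟨i, hai⟩ => ⟨i, hR i ⟨a, mem_inter.2 ⟨hai, ha⟩⟩, hai⟩,
        fun ⟨i, _, hai⟩ => ⟨i, hai⟩⟩
  rw [houtside, card_sdiff_of_subset hsub, ← card_biUnion fun i _ j _ hij => hA hij,
    Nat.add_sub_cancel' (card_le_card hsub)]

theorem IsSaturated.sum_contracted_sub_eq (hA : Pairwise fun i j => Disjoint (A i) (A j))
    (htight : ∀ i, ∑ e ∈ univ.filter (fun e => u e ∈ A i ∧ v e ∈ A i), x e
      = ((A i).card : ℝ) - 1)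
    (hR : IsSaturated A R) :
    ∑ e ∈ univ.filter (fun e => (u e ∈ R ∧ v e ∈ R) ∧ ¬ ∃ i, u e ∈ A i ∧ v e ∈ A i), x e
        - (((univ.filter (fun i => A i ⊆ R)).card : ℝ) + ((R \ univ.biUnion A).card : ℝ) - 1)
      = ∑ e ∈ univ.filter (fun e => u e ∈ R ∧ v e ∈ R), x e - ((R.card : ℝ) - 1) := by
  rw [hR.sum_inside_eq u v x hA, hR.card_eq hA, sum_congr rfl fun i _ => htight i,
    sum_sub_distrib, sum_const, nsmul_eq_mul, mul_one]
  push_cast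
  ring

end Contraction

theorem contraction_preserves_general {V E : Type*} [Fintype V] [Fintype E] [DecidableEq V]
    (u v : E → V)
    (x : E → ℝ) (hx : InSTPolytope u v x)
    (k : ℕ) (A : Fin k → Finset V)
    (hdisj : ∀ i j, i ≠ j → Disjoint (A i) (A j))
    (htight : ∀ i,
      ∑ e ∈ Finset.univ.filter (fun e => u e ∈ A i ∧ v e ∈ A i), x e
        = ((A i).card : ℝ) - 1) :
    (∀ e : E, (¬ ∃ i, u e ∈ A i ∧ v e ∈ A i) → 0 ≤ x e) ∧
    (∀ R : Finset V, (∀ i, ((A i) ∩ R).Nonempty → A i ⊆ R) →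
      R.Nonempty → R ≠ Finset.univ →
      ∑ e ∈ Finset.univ.filter
          (fun e => (u e ∈ R ∧ v e ∈ R) ∧ ¬ ∃ i, u e ∈ A i ∧ v e ∈ A i), x e
        ≤ (((Finset.univ.filter (fun i : Fin k => A i ⊆ R)).card : ℝ)
            + ((R \ (Finset.univ : Finset (Fin k)).biUnion A).card : ℝ)) - 1) ∧
    (∑ e ∈ Finset.univ.filter (fun e => ¬ ∃ i, u e ∈ A i ∧ v e ∈ A i), x e
      = ((k : ℝ)
          + (((Finset.univ : Finset V) \ (Finset.univ : Finset (Fin k)).biUnion A).card : ℝ))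
        - 1) := by
  refine ⟨fun e _ => hx.1 e, fun R hR hR_ne hR_univ => ?_, ?_⟩
  · have hslack := IsSaturated.sum_contracted_sub_eq u v x hdisj htight hR
    have hR_sets := hx.sum_inside_le u v x hR_ne hR_univ
    -- `convert` only reconciles `Nat.decidableExistsFin` with the generic `Fintype` instance
    convert sub_nonpos.1 (hslack.trans_le (sub_nonpos.2 hR_sets)) using 3
  · have hslack := IsSaturated.sum_contracted_sub_eq (R := univ) u v x hdisj htight
      fun i _ => subset_univ (A i)
    simp only [mem_univ, and_self, true_and, subset_univ, filter_true, card_univ,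
      Fintype.card_fin] at hslack
    linarith [hx.2.2]

/-- contraction preserves fractional spanning trees.  The node sets of the
contracted graph `G'` correspond to subsets `R ⊆ V` that are *closed* with respect to the
contracted sets `A₁, …, A_k` (each `A_i` meeting `R` is contained in `R`); the number of
nodes of `G'` inside such an `R` is `#{i : A_i ⊆ R} + |R \ ⋃ᵢ A_i|`, and the edges of
`G'` are the edges of `G` not lying inside any `A_i`.  The conclusion states that the
restriction `x'` of `x` to the edges of `G'` satisfies all spanning-tree-polytope
constraints of `G'`. -/
theorem contraction_preserves {V E : Type*} [Fintype V] [Fintype E] [DecidableEq V]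
    (u v : E → V)
    (hconn : (SimpleGraph.fromRel (fun a b => ∃ e : E, u e = a ∧ v e = b)).Connected)
    (x : E → ℝ) (hx : InSTPolytope u v x)
    (k : ℕ) (A : Fin k → Finset V)
    (hAne : ∀ i, (A i).Nonempty)
    (hdisj : ∀ i j, i ≠ j → Disjoint (A i) (A j))
    (htight : ∀ i,
      ∑ e ∈ Finset.univ.filter (fun e => u e ∈ A i ∧ v e ∈ A i), x e
        = ((A i).card : ℝ) - 1) :
    (∀ e : E, (¬ ∃ i, u e ∈ A i ∧ v e ∈ A i) → 0 ≤ x e) ∧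
    (∀ R : Finset V, (∀ i, ((A i) ∩ R).Nonempty → A i ⊆ R) →
      R.Nonempty → R ≠ Finset.univ →
      ∑ e ∈ Finset.univ.filter
          (fun e => (u e ∈ R ∧ v e ∈ R) ∧ ¬ ∃ i, u e ∈ A i ∧ v e ∈ A i), x e
        ≤ (((Finset.univ.filter (fun i : Fin k => A i ⊆ R)).card : ℝ)
            + ((R \ (Finset.univ : Finset (Fin k)).biUnion A).card : ℝ)) - 1) ∧
    (∑ e ∈ Finset.univ.filter (fun e => ¬ ∃ i, u e ∈ A i ∧ v e ∈ A i), x e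
      = ((k : ℝ)
          + (((Finset.univ : Finset V) \ (Finset.univ : Finset (Fin k)).biUnion A).card : ℝ))
        - 1) :=
  contraction_preserves_general u v x hx k A hdisj htight
end

section
/- Concatenation of spanning trees over a laminar decomposition: let G = (V,E) be connected and let ℒ be a laminar family of subsets of V containing V and all singletons. For each L ∈ ℒ let G_L be the graph obtained from (L, E(L)) by contracting the (inclusion-maximal proper) children of L in ℒ, and suppose T_L is a spanning tree of G_L. Then the union T = ⋃_{L∈ℒ} T_L (viewing edges of G_L as edges of G) is a spanning tree of G. -/
/-!
Every member of `ℒ` other than `V` is a child of exactly one member, so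
`∑_L #children(L) = |ℒ| - 1`, and the members without children are exactly the `|V|` singletons;
hence `∑_L (#children(L) - 1) = |V| - 1`. The trees `T_L` are edge-disjoint, since an edge of
`G_L` lies in no block strictly below `L`. For connectivity, a cut `S` crosses the block `V`;
in a minimal block `L` crossed by `S`, every child meeting `S` lies inside `S`, so `L ∩ S` is a
union of children and the spanning tree `T_L` has an edge leaving it.
-/

open Finset
open scoped Classical

/-- The children of `L` in the laminar family `ℒ`: the inclusion-maximal members of `ℒ`
properly contained in `L`. -/
noncomputable def children {V : Type*} (ℒ : Finset (Finset V)) (L : Finset V) :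
    Finset (Finset V) :=
  ℒ.filter (fun A => A ⊂ L ∧ ∀ B ∈ ℒ, A ⊂ B → ¬ B ⊂ L)

/-- `e` is an edge of the contracted graph `G_L`: both endpoints lie in `L` but not both
inside a common child of `L`. -/
def edgeOfBlock {V E : Type*} (u v : E → V) (ℒ : Finset (Finset V)) (L : Finset V)
    (e : E) : Prop :=
  u e ∈ L ∧ v e ∈ L ∧ ¬ ∃ A ∈ children ℒ L, u e ∈ A ∧ v e ∈ A

namespace Laminar

variable {V : Type*} {ℒ : Finset (Finset V)}

def IsLaminar (ℒ : Finset (Finset V)) : Prop :=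
  ∀ A ∈ ℒ, ∀ B ∈ ℒ, A ⊆ B ∨ B ⊆ A ∨ Disjoint A B

lemma mem_children_iff {L A : Finset V} :
    A ∈ children ℒ L ↔ A ∈ ℒ ∧ A ⊂ L ∧ ∀ B ∈ ℒ, A ⊂ B → ¬ B ⊂ L := by
  simp [children]

lemma exists_mem_children_superset {L A : Finset V} (hA : A ∈ ℒ) (hAL : A ⊂ L) :
    ∃ C ∈ children ℒ L, A ⊆ C := by
  obtain ⟨C, hAC, hCmem, hCmax⟩ :=
    (ℒ.filter (· ⊂ L)).exists_le_maximal (mem_filter.2 ⟨hA, hAL⟩)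
  rw [mem_filter] at hCmem
  refine ⟨C, mem_children_iff.2 ⟨hCmem.1, hCmem.2, fun B hB hCB hBL => ?_⟩, hAC⟩
  exact hCB.not_subset (hCmax (mem_filter.2 ⟨hB, hBL⟩) hCB.subset)

lemma exists_mem_children_of_ssubset {A B : Finset V} (hA : A ∈ ℒ) (hB : B ∈ ℒ)
    (hAB : A ⊂ B) : ∃ L ∈ ℒ, A ∈ children ℒ L := by
  obtain ⟨L, -, ⟨hL, hAL⟩, hLmin⟩ :=
    exists_minimal_le_of_wellFoundedLT (fun L => L ∈ ℒ ∧ A ⊂ L) B ⟨hB, hAB⟩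
  refine ⟨L, hL, mem_children_iff.2 ⟨hA, hAL, fun B hB hAB hBL => ?_⟩⟩
  exact hBL.not_subset (hLmin ⟨hB, hAB⟩ hBL.subset)

lemma eq_of_mem_children_of_mem_children (hlam : IsLaminar ℒ) (hne : ∀ A ∈ ℒ, A.Nonempty)
    {A L L' : Finset V} (hL : L ∈ ℒ) (hL' : L' ∈ ℒ)
    (h : A ∈ children ℒ L) (h' : A ∈ children ℒ L') : L = L' := by
  obtain ⟨hA, hAL, hmax⟩ := mem_children_iff.1 h
  obtain ⟨-, hAL', hmax'⟩ := mem_children_iff.1 h'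
  by_contra hLL'
  rcases hlam L hL L' hL' with hsub | hsub | hdisj
  · exact hmax' L hL hAL (hsub.ssubset_of_ne hLL')
  · exact hmax L' hL' hAL' (hsub.ssubset_of_ne (Ne.symm hLL'))
  · obtain ⟨a, ha⟩ := hne A hA
    exact disjoint_left.1 hdisj (hAL.subset ha) (hAL'.subset ha)

lemma exists_mem_children_mem (hsingle : ∀ a : V, {a} ∈ ℒ) {L : Finset V} {a : V}
    (ha : a ∈ L) (hLa : L ≠ {a}) : ∃ C ∈ children ℒ L, a ∈ C := by
  obtain ⟨C, hC, haC⟩ := exists_mem_children_superset (hsingle a)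
    (Finset.ssubset_iff_subset_ne.2 ⟨singleton_subset_iff.2 ha, hLa.symm⟩)
  exact ⟨C, hC, singleton_subset_iff.1 haC⟩

section Counting

variable [Fintype V] [DecidableEq V]

lemma biUnion_children (hV : univ ∈ ℒ) : ℒ.biUnion (children ℒ) = ℒ.erase univ := by
  ext A
  simp only [mem_biUnion, mem_erase]
  constructor
  · rintro ⟨L, -, hA⟩
    obtain ⟨hA, hAL, -⟩ := mem_children_iff.1 hA
    exact ⟨(hAL.trans_subset (subset_univ L)).ne, hA⟩
  · rintro ⟨hAV, hA⟩
    exact exists_mem_children_of_ssubset hA hV (ssubset_univ_iff.2 hAV)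

lemma sum_card_children (hlam : IsLaminar ℒ) (hne : ∀ A ∈ ℒ, A.Nonempty)
    (hV : univ ∈ ℒ) : ∑ L ∈ ℒ, #(children ℒ L) = #ℒ - 1 := by
  have hdisj : (ℒ : Set (Finset V)).PairwiseDisjoint (children ℒ) :=
    fun L hL L' hL' hLL' => disjoint_left.2 fun _ h h' =>
      hLL' (eq_of_mem_children_of_mem_children hlam hne hL hL' h h')
  rw [← card_biUnion hdisj, biUnion_children hV, card_erase_of_mem hV]

lemma children_eq_empty_iff (hne : ∀ A ∈ ℒ, A.Nonempty) (hsingle : ∀ a : V, {a} ∈ ℒ)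
    {L : Finset V} (hL : L ∈ ℒ) : children ℒ L = ∅ ↔ ∃ a, L = {a} := by
  constructor
  · intro hempty
    obtain ⟨a, ha⟩ := hne L hL
    by_contra! hLa
    obtain ⟨C, hC, -⟩ := exists_mem_children_mem hsingle ha (hLa a)
    simp [hempty] at hC
  · rintro ⟨a, rfl⟩
    refine eq_empty_iff_forall_notMem.2 fun C hC => ?_
    obtain ⟨hC, hCa, -⟩ := mem_children_iff.1 hC
    exact (hne C hC).ne_empty (ssubset_singleton_iff.1 hCa)

lemma filter_children_eq_empty (hne : ∀ A ∈ ℒ, A.Nonempty)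
    (hsingle : ∀ a : V, {a} ∈ ℒ) :
    ℒ.filter (fun L => children ℒ L = ∅) = univ.image ({·}) := by
  ext L
  simp only [mem_filter, mem_image, mem_univ, true_and]
  constructor
  · rintro ⟨hL, hempty⟩
    obtain ⟨a, rfl⟩ := (children_eq_empty_iff hne hsingle hL).1 hempty
    exact ⟨a, rfl⟩
  · rintro ⟨a, rfl⟩
    exact ⟨hsingle a, (children_eq_empty_iff hne hsingle (hsingle a)).2 ⟨a, rfl⟩⟩

lemma sum_card_children_sub_one (hlam : IsLaminar ℒ) (hne : ∀ A ∈ ℒ, A.Nonempty)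
    (hV : univ ∈ ℒ) (hsingle : ∀ a : V, {a} ∈ ℒ) :
    ∑ L ∈ ℒ, (#(children ℒ L) - 1) = Fintype.card V - 1 := by
  have hleaves : #(ℒ.filter fun L => children ℒ L = ∅) = Fintype.card V := by
    rw [filter_children_eq_empty hne hsingle, card_image_of_injective _ singleton_injective,
      card_univ]
  -- `(c - 1) + 1 = c + [c = 0]`, summed over `ℒ`
  have hsum : ∑ L ∈ ℒ, (#(children ℒ L) - 1) + #ℒ =
      ∑ L ∈ ℒ, #(children ℒ L) + #(ℒ.filter fun L => children ℒ L = ∅) := by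
    rw [card_eq_sum_ones, card_filter, ← sum_add_distrib, ← sum_add_distrib]
    refine sum_congr rfl fun L _ => ?_
    by_cases h : children ℒ L = ∅ <;> simp [h, Nat.sub_add_cancel, nonempty_iff_ne_empty]
  have hVpos : 0 < Fintype.card V := Fintype.card_pos_iff.2 (univ_nonempty_iff.1 (hne _ hV))
  have hℒpos : 0 < #ℒ := card_pos.2 ⟨_, hV⟩
  rw [sum_card_children hlam hne hV, hleaves] at hsum
  omega

end Counting

section Blocks

variable {E : Type*} {u v : E → V}

lemma not_edgeOfBlock_of_edgeOfBlock_of_ssubset {L L' : Finset V} {e : E} (hL' : L' ∈ ℒ)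
    (hL'L : L' ⊂ L) (he' : edgeOfBlock u v ℒ L' e) : ¬ edgeOfBlock u v ℒ L e := by
  rintro ⟨-, -, hnot⟩
  obtain ⟨C, hC, hL'C⟩ := exists_mem_children_superset hL' hL'L
  exact hnot ⟨C, hC, hL'C he'.1, hL'C he'.2.1⟩

lemma eq_of_edgeOfBlock_of_edgeOfBlock (hlam : IsLaminar ℒ) {L L' : Finset V} {e : E}
    (hL : L ∈ ℒ) (hL' : L' ∈ ℒ) (he : edgeOfBlock u v ℒ L e)
    (he' : edgeOfBlock u v ℒ L' e) : L = L' := by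
  by_contra hLL'
  rcases hlam L hL L' hL' with hsub | hsub | hdisj
  · exact not_edgeOfBlock_of_edgeOfBlock_of_ssubset hL (hsub.ssubset_of_ne hLL') he he'
  · exact not_edgeOfBlock_of_edgeOfBlock_of_ssubset hL' (hsub.ssubset_of_ne (Ne.symm hLL')) he' he
  · exact disjoint_left.1 hdisj he.1 he'.1

lemma pairwiseDisjoint_of_forall_edgeOfBlock [DecidableEq E] (hlam : IsLaminar ℒ)
    {T : Finset V → Finset E} (hT : ∀ L ∈ ℒ, ∀ e ∈ T L, edgeOfBlock u v ℒ L e) :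
    (ℒ : Set (Finset V)).PairwiseDisjoint T :=
  fun L hL L' hL' hLL' => disjoint_left.2 fun e he he' =>
    hLL' (eq_of_edgeOfBlock_of_edgeOfBlock hlam hL hL' (hT L hL e he) (hT L' hL' e he'))

end Blocks

section Crossing

variable [DecidableEq V]

def Crosses (S L : Finset V) : Prop := (L ∩ S).Nonempty ∧ (L \ S).Nonempty

lemma exists_mem_children_subset_inter_of_minimal (hsingle : ∀ a : V, {a} ∈ ℒ)
    {S L : Finset V} (hL : Minimal (fun L => L ∈ ℒ ∧ Crosses S L) L) :
    ∀ a ∈ L ∩ S, ∃ C ∈ children ℒ L, a ∈ C ∧ C ⊆ L ∩ S := by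
  intro a ha
  rw [mem_inter] at ha
  have hLa : L ≠ {a} := by
    rintro rfl
    obtain ⟨b, hb⟩ := hL.prop.2.2
    obtain ⟨hba, hbS⟩ := mem_sdiff.1 hb
    exact hbS (mem_singleton.1 hba ▸ ha.2)
  obtain ⟨C, hC, haC⟩ := exists_mem_children_mem hsingle ha.1 hLa
  obtain ⟨hCℒ, hCL, -⟩ := mem_children_iff.1 hC
  have hCS : C ⊆ S := by
    by_contra hCS
    have hcross : Crosses S C := ⟨⟨a, mem_inter.2 ⟨haC, ha.2⟩⟩, sdiff_nonempty.2 hCS⟩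
    exact hCL.not_subset (hL.2 ⟨hCℒ, hcross⟩ hCL.subset)
  exact ⟨C, hC, haC, subset_inter hCL.subset hCS⟩

end Crossing

end Laminar

open Laminar

/-- "`T L` is a spanning tree of `G_L`" is expressed by: `T L ⊆ E_L`,
`|T L| = (#children of L) − 1`, and every nonempty proper union-of-children `R ⊊ L` is crossed
by an edge of `T L`; "`T` is a spanning tree of `G`" by: `|T| = |V| − 1` and `T` crosses every
nonempty proper subset of `V`. -/
theorem laminar_concatenation_general {V E : Type*} [Fintype V]
    [DecidableEq V] [DecidableEq E]
    (u v : E → V)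
    (ℒ : Finset (Finset V))
    (hlaminar : ∀ A ∈ ℒ, ∀ B ∈ ℒ, A ⊆ B ∨ B ⊆ A ∨ Disjoint A B)
    (hne : ∀ A ∈ ℒ, A.Nonempty)
    (hV : (Finset.univ : Finset V) ∈ ℒ)
    (hsingle : ∀ a : V, ({a} : Finset V) ∈ ℒ)
    (T : Finset V → Finset E)
    (hTsub : ∀ L ∈ ℒ, ∀ e ∈ T L, edgeOfBlock u v ℒ L e)
    (hTcard : ∀ L ∈ ℒ, (T L).card = (children ℒ L).card - 1)
    (hTconn : ∀ L ∈ ℒ, ∀ R : Finset V, R ⊆ L →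
      (∀ a ∈ R, ∃ A ∈ children ℒ L, a ∈ A ∧ A ⊆ R) → R.Nonempty → R ≠ L →
      ∃ e ∈ T L, (u e ∈ R ∧ v e ∈ L \ R) ∨ (v e ∈ R ∧ u e ∈ L \ R)) :
    (ℒ.biUnion T).card = Fintype.card V - 1 ∧
    ∀ S : Finset V, S.Nonempty → S ≠ Finset.univ →
      ∃ e ∈ ℒ.biUnion T, (u e ∈ S ∧ v e ∉ S) ∨ (u e ∉ S ∧ v e ∈ S) := by
  constructor
  · rw [card_biUnion (pairwiseDisjoint_of_forall_edgeOfBlock hlaminar hTsub), sum_congr rfl hTcard,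
      sum_card_children_sub_one hlaminar hne hV hsingle]
  · intro S hS hSV
    have hVcross : Crosses S univ :=
      ⟨by simpa using hS, sdiff_nonempty.2 fun h => hSV (univ_subset_iff.1 h)⟩
    obtain ⟨L, -, hLmin⟩ :=
      exists_minimal_le_of_wellFoundedLT (fun L => L ∈ ℒ ∧ Crosses S L) univ ⟨hV, hVcross⟩
    obtain ⟨hL, hLS, b, hb⟩ := hLmin.prop
    obtain ⟨hbL, hbS⟩ := mem_sdiff.1 hb
    have hLS_ne : L ∩ S ≠ L := fun h => hbS (inter_eq_left.1 h hbL)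
    obtain ⟨e, he, hcross⟩ := hTconn L hL (L ∩ S) inter_subset_left
      (exists_mem_children_subset_inter_of_minimal hsingle hLmin) hLS hLS_ne
    refine ⟨e, mem_biUnion.2 ⟨L, hL, he⟩, ?_⟩
    simp only [mem_inter, mem_sdiff] at hcross
    tauto

/-- concatenation of spanning trees over a laminar decomposition.  The
nodes of the contracted graph `G_L` are the children of `L`; a subset `R ⊆ L` that is a
union of children corresponds to a node set of `G_L`.  "`T L` is a spanning tree of
`G_L`" is expressed by: `T L ⊆ E_L`, `|T L| = (#children of L) − 1`, and every nonempty
proper union-of-children `R ⊊ L` is crossed by an edge of `T L`.  The conclusion states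
that `T = ⋃_{L ∈ ℒ} T L` is a spanning tree of `G`: it has `|V| − 1` edges and crosses
every nonempty proper subset of `V`. -/
theorem laminar_concatenation {V E : Type*} [Fintype V] [Fintype E]
    [DecidableEq V] [DecidableEq E]
    (u v : E → V)
    (hconn : (SimpleGraph.fromRel (fun a b => ∃ e : E, u e = a ∧ v e = b)).Connected)
    (ℒ : Finset (Finset V))
    (hlaminar : ∀ A ∈ ℒ, ∀ B ∈ ℒ, A ⊆ B ∨ B ⊆ A ∨ Disjoint A B)
    (hne : ∀ A ∈ ℒ, A.Nonempty)
    (hV : (Finset.univ : Finset V) ∈ ℒ)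
    (hsingle : ∀ a : V, ({a} : Finset V) ∈ ℒ)
    (T : Finset V → Finset E)
    (hTsub : ∀ L ∈ ℒ, ∀ e ∈ T L, edgeOfBlock u v ℒ L e)
    (hTcard : ∀ L ∈ ℒ, (T L).card = (children ℒ L).card - 1)
    (hTconn : ∀ L ∈ ℒ, ∀ R : Finset V, R ⊆ L →
      (∀ a ∈ R, ∃ A ∈ children ℒ L, a ∈ A ∧ A ⊆ R) → R.Nonempty → R ≠ L →
      ∃ e ∈ T L, (u e ∈ R ∧ v e ∈ L \ R) ∨ (v e ∈ R ∧ u e ∈ L \ R)) :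
    (ℒ.biUnion T).card = Fintype.card V - 1 ∧
    ∀ S : Finset V, S.Nonempty → S ≠ Finset.univ →
      ∃ e ∈ ℒ.biUnion T, (u e ∈ S ∧ v e ∉ S) ∨ (u e ∉ S ∧ v e ∈ S) :=
  laminar_concatenation_general u v ℒ hlaminar hne hV hsingle T hTsub hTcard hTconn
end

section
/- Rainbow-free order implies rainbow-freeness after potential minimization: let e₁, …, e_k be edges with associated sets 𝒮_{e_i} ⊆ 𝒮 ordered so that |𝒮_{e₁}| ≤ |𝒮_{e₂}| ≤ … ≤ |𝒮_{e_k}|, and let w be strictly increasing along this order (w_{e₁} < … < w_{e_k}). If x' minimizes wᵀz over a polytope containing both x' and, for each pair e = e_i, f = e_j with i < j, 𝒮_{e_i} ⊆ 𝒮_{e_j}, and the feasibility-preserving transfer of ε > 0 from f to e (as in the weight-transfer lemma), then no two edges e, f ∈ supp(x') lying in a common tight-set block with 𝒮_e ⊆ 𝒮_f can both have positive value with w_e < w_f. -/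
open Finset
open scoped Classical

theorem sum_mul_transfer {E : Type*} [Fintype E] (w x : E → ℝ) (e f : E) (ε : ℝ) :
    ∑ g, w g * (x g + (if g = e then ε else 0) - (if g = f then ε else 0))
      = ∑ g, w g * x g - ε * (w f - w e) := by
  simp only [mul_sub, mul_add, sum_add_distrib, sum_sub_distrib, mul_ite, mul_zero,
    sum_ite_eq', mem_univ, if_true]
  ring

theorem sum_mul_transfer_lt {E : Type*} [Fintype E] (w x : E → ℝ) {e f : E} {ε : ℝ}
    (hw : w e < w f) (hε : 0 < ε) :
    ∑ g, w g * (x g + (if g = e then ε else 0) - (if g = f then ε else 0))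
      < ∑ g, w g * x g := by
  rw [sum_mul_transfer]
  exact sub_lt_self _ (mul_pos hε (sub_pos.mpr hw))

theorem rainbow_free_after_minimization_general {E : Type*} [Fintype E]
    (Q : Set (E → ℝ))
    (w : E → ℝ) (x' : E → ℝ)
    (hmin : ∀ z ∈ Q, ∑ g, w g * x' g ≤ ∑ g, w g * z g)
    (e f : E)
    (hw : w e < w f)
    -- the feasibility-preserving transfer of ε from f to e stays in Q
    (htransfer : ∀ ε : ℝ, 0 < ε → ε ≤ x' f →
      (fun g => x' g + (if g = e then ε else 0) - (if g = f then ε else 0)) ∈ Q) :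
    ¬ (0 < x' e ∧ 0 < x' f) := by
  rintro ⟨-, hf⟩
  exact (hmin _ (htransfer _ hf le_rfl)).not_gt (sum_mul_transfer_lt w x' hw hf)

/-- rainbow-freeness after potential minimization.  Let `x'` minimize the
potential `wᵀz` over a polytope `Q` (the feasible region of the potential LP).  Suppose
`e, f` are edges lying in a common tight-set block `L` (both lie in `E(L)` with `L`
tight at `x'`), with `𝒮_e ⊆ 𝒮_f` (every chain set cut by `e` is cut by `f`) and
`w_e < w_f`, and suppose the `ε`-transfer from `f` to `e` preserves membership in `Q`
(the feasibility-preserving transfer).  Then `e` and `f` cannot both lie in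
`supp(x')`. -/
theorem rainbow_free_after_minimization {V E : Type*} [Fintype V] [Fintype E]
    (u v : E → V) (𝒮 : Finset (Finset V))
    (Q : Set (E → ℝ))
    (hQpoly : ∃ s : Finset (E → ℝ), Q = convexHull ℝ (↑s : Set (E → ℝ)))
    (w : E → ℝ) (x' : E → ℝ) (hx'Q : x' ∈ Q)
    (hmin : ∀ z ∈ Q, ∑ g, w g * x' g ≤ ∑ g, w g * z g)
    (e f : E)
    -- e and f lie in a common tight-set block L of a laminar decomposition of x'
    (L : Finset V)
    (heL : u e ∈ L ∧ v e ∈ L) (hfL : u f ∈ L ∧ v f ∈ L)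
    (hLtight : ∑ g ∈ Finset.univ.filter (fun g => u g ∈ L ∧ v g ∈ L), x' g
      = (L.card : ℝ) - 1)
    -- 𝒮_e ⊆ 𝒮_f
    (hsub : ∀ S ∈ 𝒮,
      ((u e ∈ S ∧ v e ∉ S) ∨ (u e ∉ S ∧ v e ∈ S)) →
      ((u f ∈ S ∧ v f ∉ S) ∨ (u f ∉ S ∧ v f ∈ S)))
    (hw : w e < w f)
    -- the feasibility-preserving transfer of ε from f to e stays in Q
    (htransfer : ∀ ε : ℝ, 0 < ε → ε ≤ x' f →
      (fun g => x' g + (if g = e then ε else 0) - (if g = f then ε else 0)) ∈ Q) :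
    ¬ (0 < x' e ∧ 0 < x' f) :=
  rainbow_free_after_minimization_general Q w x' hmin e f hw htransfer
end

section
/- Cost decomposition along a laminar partition with equal costs per block: let G = (V,E) be connected, x a point in the spanning tree polytope of G, ℒ a laminar family containing V and all singletons with x(E(L)) = |L|−1 for all L ∈ ℒ, and suppose that for each L ∈ ℒ all edges of supp(x) ∩ E_L have equal cost c-value, where E_L are the edges of the contraction graph G_L (so {E_L}_{L∈ℒ} partitions E). If T is a spanning tree of G such that T ∩ E_L is a spanning tree of G_L for every L ∈ ℒ and T ⊆ supp(x), then Σ_{e∈T} c_e = Σ_{e∈E} c_e x_e. -/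
/-!
Every edge `e` lies in exactly one block `E_L`, namely for the smallest `L ∈ ℒ` containing both
endpoints of `e`, so both sides split into sums over `L ∈ ℒ`. The children of a nontrivial `L`
partition `L`, so tightness of `L` and of its children gives `x(E_L) = #children - 1`, which is
`|T ∩ E_L|`. All support edges of `E_L`, in particular those of `T`, share one cost `κ_L`, so
both block sums equal `κ_L · x(E_L)`.
-/

open Finset
open scoped Classical

def IsLaminar {V : Type*} (ℒ : Finset (Finset V)) : Prop :=
  ∀ A ∈ ℒ, ∀ B ∈ ℒ, A ⊆ B ∨ B ⊆ A ∨ Disjoint A B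

section Children

variable {V : Type*} {ℒ : Finset (Finset V)} {L A : Finset V}

theorem mem_of_mem_children (h : A ∈ children ℒ L) : A ∈ ℒ :=
  (mem_filter.mp h).1

theorem ssubset_of_mem_children (h : A ∈ children ℒ L) : A ⊂ L :=
  (mem_filter.mp h).2.1

theorem exists_mem_children_superset (hA : A ∈ ℒ) (hAL : A ⊂ L) :
    ∃ B ∈ children ℒ L, A ⊆ B := by
  obtain ⟨B, hB, hBmax⟩ := exists_max_image (ℒ.filter fun B => A ⊆ B ∧ B ⊂ L) card
    ⟨A, mem_filter.mpr ⟨hA, subset_rfl, hAL⟩⟩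
  obtain ⟨hBℒ, hAB, hBL⟩ := mem_filter.mp hB
  refine ⟨B, mem_filter.mpr ⟨hBℒ, hBL, fun C hC hBC hCL => ?_⟩, hAB⟩
  exact (card_lt_card hBC).not_ge (hBmax C (mem_filter.mpr ⟨hC, hAB.trans hBC.subset, hCL⟩))

theorem IsLaminar.pairwiseDisjoint_children (hℒ : IsLaminar ℒ) :
    (children ℒ L : Set (Finset V)).PairwiseDisjoint id := by
  intro A hA B hB hAB
  obtain ⟨hAℒ, hAL, hAmax⟩ := mem_filter.mp hA
  obtain ⟨hBℒ, hBL, hBmax⟩ := mem_filter.mp hB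
  rcases hℒ A hAℒ B hBℒ with h | h | h
  · exact absurd hBL (hAmax B hBℒ (ssubset_of_subset_of_ne h hAB))
  · exact absurd hAL (hBmax A hAℒ (ssubset_of_subset_of_ne h hAB.symm))
  · exact h

theorem biUnion_children [DecidableEq V] (hsingle : ∀ a ∈ L, {a} ∈ ℒ) (hL : L.Nontrivial) :
    (children ℒ L).biUnion id = L := by
  refine Subset.antisymm (biUnion_subset.mpr fun A hA => (ssubset_of_mem_children hA).subset)
    fun a ha => ?_
  have hsub : {a} ⊂ L := ssubset_of_subset_of_ne (singleton_subset_iff.mpr ha) hL.ne_singleton.symm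
  obtain ⟨B, hB, haB⟩ := exists_mem_children_superset (hsingle a ha) hsub
  exact mem_biUnion.mpr ⟨B, hB, haB (mem_singleton_self a)⟩

theorem children_nonempty (hsingle : ∀ a ∈ L, {a} ∈ ℒ) (hL : L.Nontrivial) :
    (children ℒ L).Nonempty := by
  obtain ⟨a, ha⟩ := hL.nonempty
  rw [← biUnion_children hsingle hL] at ha
  obtain ⟨B, hB, -⟩ := mem_biUnion.mp ha
  exact ⟨B, hB⟩

theorem IsLaminar.sum_card_children (hℒ : IsLaminar ℒ) (hsingle : ∀ a ∈ L, {a} ∈ ℒ)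
    (hL : L.Nontrivial) : ∑ A ∈ children ℒ L, A.card = L.card := by
  have h := card_biUnion (t := id) (hℒ.pairwiseDisjoint_children (L := L))
  rwa [biUnion_children hsingle hL, eq_comm] at h

theorem eq_empty_of_mem_children_singleton {a : V} (hA : A ∈ children ℒ {a}) : A = ∅ :=
  ssubset_singleton_iff.mp (ssubset_of_mem_children hA)

theorem card_children_singleton_le_one (a : V) : (children ℒ {a}).card ≤ 1 :=
  card_le_one.mpr fun _ hA _ hB =>
    (eq_empty_of_mem_children_singleton hA).trans (eq_empty_of_mem_children_singleton hB).symm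

end Children

theorem Finset.sum_eq_sum_sum_filter_of_existsUnique {ι α M : Type*} [AddCommMonoid M]
    (s : Finset α) (t : Finset ι) (p : ι → α → Prop) [∀ i, DecidablePred (p i)]
    (h : ∀ a ∈ s, ∃! i, i ∈ t ∧ p i a) (f : α → M) :
    ∑ a ∈ s, f a = ∑ i ∈ t, ∑ a ∈ s.filter (p i), f a := by
  simp_rw [sum_filter]
  rw [sum_comm]
  refine sum_congr rfl fun a ha => ?_
  obtain ⟨i, ⟨hit, hia⟩, huniq⟩ := h a ha
  rw [sum_eq_single_of_mem i hit fun j hjt hji => if_neg fun hja => hji (huniq j ⟨hjt, hja⟩),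
    if_pos hia]

section Blocks

variable {V E : Type*} (u v : E → V) {ℒ : Finset (Finset V)} {L L' : Finset V} {e : E}

theorem IsLaminar.subset_of_edgeOfBlock (hℒ : IsLaminar ℒ) (hL : L ∈ ℒ) (hL' : L' ∈ ℒ)
    (he : edgeOfBlock u v ℒ L e) (hu : u e ∈ L') (hv : v e ∈ L') : L ⊆ L' := by
  rcases hℒ L hL L' hL' with h | h | h
  · exact h
  · obtain rfl | hne := eq_or_ne L' L
    · exact subset_rfl
    obtain ⟨B, hB, hL'B⟩ := exists_mem_children_superset hL' (ssubset_of_subset_of_ne h hne)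
    exact absurd ⟨B, hB, hL'B hu, hL'B hv⟩ he.2.2
  · exact absurd hu (disjoint_left.mp h he.1)

theorem IsLaminar.existsUnique_edgeOfBlock [Fintype V] (hℒ : IsLaminar ℒ) (hV : univ ∈ ℒ)
    (e : E) : ∃! L, L ∈ ℒ ∧ edgeOfBlock u v ℒ L e := by
  obtain ⟨L, hL, hLmin⟩ := exists_min_image (ℒ.filter fun L => u e ∈ L ∧ v e ∈ L) card
    ⟨univ, mem_filter.mpr ⟨hV, mem_univ _, mem_univ _⟩⟩
  obtain ⟨hLℒ, hu, hv⟩ := mem_filter.mp hL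
  have hblock : edgeOfBlock u v ℒ L e := by
    refine ⟨hu, hv, fun ⟨A, hA, huA, hvA⟩ => ?_⟩
    have hAmin := hLmin A (mem_filter.mpr ⟨mem_of_mem_children hA, huA, hvA⟩)
    exact (card_lt_card (ssubset_of_mem_children hA)).not_ge hAmin
  refine ⟨L, ⟨hLℒ, hblock⟩, fun L' ⟨hL'ℒ, hL'⟩ => Subset.antisymm ?_ ?_⟩
  · exact hℒ.subset_of_edgeOfBlock u v hL'ℒ hLℒ hL' hu hv
  · exact hℒ.subset_of_edgeOfBlock u v hLℒ hL'ℒ hblock hL'.1 hL'.2.1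

variable [Fintype E] [DecidableEq V]

def inducedEdges (S : Finset V) : Finset E :=
  univ.filter fun e => u e ∈ S ∧ v e ∈ S

@[simp]
theorem mem_inducedEdges {S : Finset V} : e ∈ inducedEdges u v S ↔ u e ∈ S ∧ v e ∈ S := by
  simp [inducedEdges]

theorem disjoint_inducedEdges {A B : Finset V} (h : Disjoint A B) :
    Disjoint (inducedEdges u v A) (inducedEdges u v B) :=
  disjoint_filter.mpr fun _ _ hA hB => disjoint_left.mp h hA.1 hB.1

theorem IsLaminar.sum_inducedEdges (hℒ : IsLaminar ℒ) (x : E → ℝ) :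
    ∑ e ∈ inducedEdges u v L, x e = ∑ e ∈ univ.filter (edgeOfBlock u v ℒ L), x e
      + ∑ A ∈ children ℒ L, ∑ e ∈ inducedEdges u v A, x e := by
  have hblock : (inducedEdges u v L).filter (edgeOfBlock u v ℒ L)
      = univ.filter (edgeOfBlock u v ℒ L) := by
    ext e
    simp only [mem_filter, mem_inducedEdges, mem_univ, true_and, and_iff_right_iff_imp]
    exact fun h => ⟨h.1, h.2.1⟩
  have hchildren : (inducedEdges u v L).filter (fun e => ¬ edgeOfBlock u v ℒ L e)
      = (children ℒ L).biUnion (inducedEdges u v) := by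
    ext e
    simp only [mem_filter, mem_inducedEdges, mem_biUnion]
    constructor
    · rintro ⟨⟨hu, hv⟩, h⟩
      exact not_not.mp fun hA => h ⟨hu, hv, hA⟩
    · rintro ⟨A, hA, hu, hv⟩
      have hAL := (ssubset_of_mem_children hA).subset
      exact ⟨⟨hAL hu, hAL hv⟩, fun h => h.2.2 ⟨A, hA, hu, hv⟩⟩
  rw [← sum_filter_add_sum_filter_not _ (edgeOfBlock u v ℒ L), hblock, hchildren,
    sum_biUnion (t := inducedEdges u v) fun A hA B hB hAB =>
      disjoint_inducedEdges u v (hℒ.pairwiseDisjoint_children hA hB hAB)]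

theorem filter_edgeOfBlock_singleton (a : V) :
    univ.filter (edgeOfBlock u v ℒ {a}) = inducedEdges u v {a} := by
  ext e
  simp only [mem_filter, mem_univ, true_and, mem_inducedEdges]
  refine ⟨fun h => ⟨h.1, h.2.1⟩, fun ⟨hu, hv⟩ => ⟨hu, hv, fun ⟨A, hA, huA, _⟩ => ?_⟩⟩
  simp [eq_empty_of_mem_children_singleton hA] at huA

variable {x : E → ℝ}

theorem IsLaminar.sum_edgeOfBlock_of_nontrivial (hℒ : IsLaminar ℒ)
    (htight : ∀ A ∈ ℒ, ∑ e ∈ inducedEdges u v A, x e = A.card - 1)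
    (hsingle : ∀ a ∈ L, {a} ∈ ℒ) (hLℒ : L ∈ ℒ) (hL : L.Nontrivial) :
    ∑ e ∈ univ.filter (edgeOfBlock u v ℒ L), x e = (children ℒ L).card - 1 := by
  have h := hℒ.sum_inducedEdges u v x (L := L)
  rw [htight L hLℒ, sum_congr rfl fun A hA => htight A (mem_of_mem_children hA),
    sum_sub_distrib, sum_const, ← Nat.cast_sum, hℒ.sum_card_children hsingle hL] at h
  simp only [nsmul_eq_mul, mul_one] at h
  linarith

theorem IsLaminar.card_filter_edgeOfBlock_eq_sum (hℒ : IsLaminar ℒ)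
    (htight : ∀ A ∈ ℒ, ∑ e ∈ inducedEdges u v A, x e = A.card - 1)
    (hsingle : ∀ a, {a} ∈ ℒ) (hLℒ : L ∈ ℒ) (hL : L.Nonempty) {T : Finset E}
    (hT : (T.filter (edgeOfBlock u v ℒ L)).card = (children ℒ L).card - 1) :
    ((T.filter (edgeOfBlock u v ℒ L)).card : ℝ)
      = ∑ e ∈ univ.filter (edgeOfBlock u v ℒ L), x e := by
  rcases hL.exists_eq_singleton_or_nontrivial with ⟨a, rfl⟩ | hL
  · -- `{a}` has at most the child `∅`, so the truncated `#children - 1` is `0`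
    rw [hT, Nat.sub_eq_zero_of_le (card_children_singleton_le_one a),
      filter_edgeOfBlock_singleton, htight _ hLℒ, card_singleton]
    simp
  · rw [hT, Nat.cast_sub (children_nonempty (fun a _ => hsingle a) hL).card_pos,
      hℒ.sum_edgeOfBlock_of_nontrivial u v htight (fun a _ => hsingle a) hLℒ hL]
    simp

end Blocks

theorem Finset.sum_eq_sum_mul_of_card_eq {ι : Type*} {s t : Finset ι} {c x : ι → ℝ}
    (hx : ∀ i ∈ s, 0 ≤ x i) (hc : ∀ i ∈ s, ∀ j ∈ s, 0 < x i → 0 < x j → c i = c j)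
    (hts : t ⊆ s) (ht : ∀ i ∈ t, 0 < x i) (hcard : (t.card : ℝ) = ∑ i ∈ s, x i) :
    ∑ i ∈ t, c i = ∑ i ∈ s, c i * x i := by
  by_cases hsupp : ∃ j ∈ s, 0 < x j
  · obtain ⟨j, hjs, hj⟩ := hsupp
    calc ∑ i ∈ t, c i = ∑ i ∈ t, c j := sum_congr rfl fun i hi => hc i (hts hi) j hjs (ht i hi) hj
      _ = c j * ∑ i ∈ s, x i := by rw [sum_const, nsmul_eq_mul, hcard, mul_comm]
      _ = ∑ i ∈ s, c i * x i := by
        rw [mul_sum]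
        refine sum_congr rfl fun i hi => ?_
        rcases (hx i hi).eq_or_lt with h | h
        · simp [← h]
        · rw [hc i hi j hjs h hj]
  · push Not at hsupp
    have hx0 : ∀ i ∈ s, x i = 0 := fun i hi => le_antisymm (hsupp i hi) (hx i hi)
    have ht0 : t = ∅ := eq_empty_of_forall_notMem fun i hi => (ht i hi).ne' (hx0 i (hts hi))
    rw [ht0, sum_empty, eq_comm]
    exact sum_eq_zero fun i hi => by rw [hx0 i hi, mul_zero]

theorem cost_decomposition_general {V E : Type*} [Fintype V] [Fintype E]
    [DecidableEq V]
    (u v : E → V)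
    (c : E → ℝ) (x : E → ℝ)
    -- x is in the spanning tree polytope of G
    (hx0 : ∀ e, 0 ≤ x e)
    -- ℒ is a laminar family containing V and all singletons, all members tight at x
    (ℒ : Finset (Finset V))
    (hlaminar : ∀ A ∈ ℒ, ∀ B ∈ ℒ, A ⊆ B ∨ B ⊆ A ∨ Disjoint A B)
    (hne : ∀ A ∈ ℒ, A.Nonempty)
    (hV : (Finset.univ : Finset V) ∈ ℒ)
    (hsingle : ∀ a : V, ({a} : Finset V) ∈ ℒ)
    (htight : ∀ L ∈ ℒ,
      ∑ e ∈ Finset.univ.filter (fun e => u e ∈ L ∧ v e ∈ L), x e = (L.card : ℝ) - 1)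
    -- within each block, all support edges have equal cost
    (heq : ∀ L ∈ ℒ, ∀ e e' : E, edgeOfBlock u v ℒ L e → edgeOfBlock u v ℒ L e' →
      0 < x e → 0 < x e' → c e = c e')
    -- T ⊆ supp(x) and T ∩ E_L is a spanning tree of G_L for every L ∈ ℒ
    (T : Finset E)
    (hTsupp : ∀ e ∈ T, 0 < x e)
    (hTcard : ∀ L ∈ ℒ,
      (T.filter (edgeOfBlock u v ℒ L)).card = (children ℒ L).card - 1) :
    ∑ e ∈ T, c e = ∑ e : E, c e * x e := by
  have hblock (e : E) : ∃! L, L ∈ ℒ ∧ edgeOfBlock u v ℒ L e :=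
    IsLaminar.existsUnique_edgeOfBlock u v hlaminar hV e
  rw [sum_eq_sum_sum_filter_of_existsUnique T ℒ _ (fun e _ => hblock e),
    sum_eq_sum_sum_filter_of_existsUnique univ ℒ _ (fun e _ => hblock e)]
  refine sum_congr rfl fun L hL => sum_eq_sum_mul_of_card_eq (fun e _ => hx0 e) ?_
    (filter_subset_filter _ (subset_univ T)) (fun e he => hTsupp e (mem_filter.mp he).1)
    (IsLaminar.card_filter_edgeOfBlock_eq_sum u v hlaminar htight hsingle hL (hne L hL)
      (hTcard L hL))
  exact fun e he e' he' => heq L hL e e' (mem_filter.mp he).2 (mem_filter.mp he').2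

/-- cost decomposition along a laminar partition with equal costs per
block.  If `x` lies in the spanning tree polytope, all members of the laminar family `ℒ`
(containing `V` and all singletons) are tight at `x`, all support edges within each
block `E_L` have the same cost, and `T ⊆ supp(x)` is a spanning tree of `G` whose
intersection with each block `E_L` is a spanning tree of the contraction `G_L`, then
`Σ_{e ∈ T} c_e = Σ_e c_e x_e`. -/
theorem cost_decomposition {V E : Type*} [Fintype V] [Fintype E]
    [DecidableEq V] [DecidableEq E]
    (u v : E → V)
    (hconn : (SimpleGraph.fromRel (fun a b => ∃ e : E, u e = a ∧ v e = b)).Connected)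
    (c : E → ℝ) (x : E → ℝ)
    -- x is in the spanning tree polytope of G
    (hx0 : ∀ e, 0 ≤ x e)
    (hxsub : ∀ S : Finset V, S.Nonempty → S ≠ Finset.univ →
      ∑ e ∈ Finset.univ.filter (fun e => u e ∈ S ∧ v e ∈ S), x e ≤ (S.card : ℝ) - 1)
    (hxspan : ∑ e : E, x e = (Fintype.card V : ℝ) - 1)
    -- ℒ is a laminar family containing V and all singletons, all members tight at x
    (ℒ : Finset (Finset V))
    (hlaminar : ∀ A ∈ ℒ, ∀ B ∈ ℒ, A ⊆ B ∨ B ⊆ A ∨ Disjoint A B)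
    (hne : ∀ A ∈ ℒ, A.Nonempty)
    (hV : (Finset.univ : Finset V) ∈ ℒ)
    (hsingle : ∀ a : V, ({a} : Finset V) ∈ ℒ)
    (htight : ∀ L ∈ ℒ,
      ∑ e ∈ Finset.univ.filter (fun e => u e ∈ L ∧ v e ∈ L), x e = (L.card : ℝ) - 1)
    -- within each block, all support edges have equal cost
    (heq : ∀ L ∈ ℒ, ∀ e e' : E, edgeOfBlock u v ℒ L e → edgeOfBlock u v ℒ L e' →
      0 < x e → 0 < x e' → c e = c e')
    -- T ⊆ supp(x) and T ∩ E_L is a spanning tree of G_L for every L ∈ ℒ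
    (T : Finset E)
    (hTsupp : ∀ e ∈ T, 0 < x e)
    (hTcard : ∀ L ∈ ℒ,
      (T.filter (edgeOfBlock u v ℒ L)).card = (children ℒ L).card - 1)
    (hTconn : ∀ L ∈ ℒ, ∀ R : Finset V, R ⊆ L →
      (∀ a ∈ R, ∃ A ∈ children ℒ L, a ∈ A ∧ A ⊆ R) → R.Nonempty → R ≠ L →
      ∃ e ∈ T.filter (edgeOfBlock u v ℒ L),
        (u e ∈ R ∧ v e ∈ L \ R) ∨ (v e ∈ R ∧ u e ∈ L \ R)) :
    ∑ e ∈ T, c e = ∑ e : E, c e * x e :=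
  cost_decomposition_general u v c x hx0 ℒ hlaminar hne hV hsingle htight heq T hTsupp hTcard
end
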